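/- arXiv:0810.2767 — 2 statements merged into one kernel-verified Lean document; each statement's English description precedes it below -/
import Mathlib

section
/- The projection θ_n: F[Ḡ_n] → F[Ḡ_{n-1}] (taking upper-left corners) maps Δ_n^ρ to Δ_{n-1}^ρ for every partition-valued function ρ on G_* (with the convention Δ_k^ρ = 0 when ‖ρ‖ > k). -/
open MonoidAlgebra

/-- The group algebra `ℤ[G]`, used as an ambient ring in which `G ∪ {0}` embeds as
`{0} ∪ {single g 1 | g ∈ G}`. -/
abbrev GA (G : Type*) [Group G] := MonoidAlgebra ℤ G

/-- `a` is an entry in `G ∪ {0}`. -/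
def IsEnt {G : Type*} [Group G] (a : GA G) : Prop := a = 0 ∨ ∃ g : G, a = single g 1

/-- An `n × n` matrix with entries in `G ∪ {0}` such that every row and every column
contains at most one nonzero entry. -/
def IsRC {G : Type*} [Group G] {n : ℕ} (M : Matrix (Fin n) (Fin n) (GA G)) : Prop :=
  (∀ i, {j | M i j ≠ 0}.Subsingleton) ∧ (∀ j, {i | M i j ≠ 0}.Subsingleton) ∧
    ∀ i j, IsEnt (M i j)

theorem IsEnt.mul {G : Type*} [Group G] {a b : GA G} (ha : IsEnt a) (hb : IsEnt b) :
    IsEnt (a * b) := by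
  rcases ha with ha | ⟨g, rfl⟩
  · exact Or.inl (by simp [ha])
  rcases hb with hb | ⟨g', rfl⟩
  · exact Or.inl (by simp [hb])
  · exact Or.inr ⟨g * g', by simp [MonoidAlgebra.single_mul_single]⟩

theorem exists_of_mul_ne_zero {G : Type*} [Group G] {n : ℕ}
    {M N : Matrix (Fin n) (Fin n) (GA G)} {i j : Fin n} (h : (M * N) i j ≠ 0) :
    ∃ k, M i k ≠ 0 ∧ N k j ≠ 0 := by
  by_contra hc
  push_neg at hc
  apply h
  rw [Matrix.mul_apply]
  refine Finset.sum_eq_zero fun k _ => ?_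
  by_cases hk : M i k = 0
  · simp [hk]
  · simp [hc k hk]

/-- The semigroup `Ḡ_n` of `n × n` matrices over `G ∪ {0}` with at most one nonzero entry
in each row and each column, realized as a submonoid of the matrix ring over `ℤ[G]`. -/
def GBar (G : Type*) [Group G] (n : ℕ) : Submonoid (Matrix (Fin n) (Fin n) (GA G)) where
  carrier := {M | IsRC M}
  one_mem' := by
    have key : ∀ a b : Fin n, (1 : Matrix (Fin n) (Fin n) (GA G)) a b ≠ 0 → a = b := by
      intro a b h
      by_contra hab
      simp [Matrix.one_apply, hab] at h
    refine ⟨fun i => ?_, fun j => ?_, fun i j => ?_⟩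
    · intro a ha b hb
      exact (key i a ha).symm.trans (key i b hb)
    · intro a ha b hb
      exact (key a j ha).trans (key b j hb).symm
    · by_cases h : i = j
      · subst h
        exact Or.inr ⟨1, by simp [Matrix.one_apply, MonoidAlgebra.one_def]⟩
      · exact Or.inl (by simp [Matrix.one_apply, h])
  mul_mem' := by
    rintro M N ⟨hMr, hMc, hMe⟩ ⟨hNr, hNc, hNe⟩
    refine ⟨fun i => ?_, fun j => ?_, fun i j => ?_⟩
    · intro a ha b hb
      obtain ⟨k, hk1, hk2⟩ := exists_of_mul_ne_zero ha
      obtain ⟨k', hk1', hk2'⟩ := exists_of_mul_ne_zero hb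
      have : k = k' := hMr i hk1 hk1'
      subst this
      exact hNr k hk2 hk2'
    · intro a ha b hb
      obtain ⟨k, hk1, hk2⟩ := exists_of_mul_ne_zero ha
      obtain ⟨k', hk1', hk2'⟩ := exists_of_mul_ne_zero hb
      have : k = k' := hNc j hk2 hk2'
      subst this
      exact hMc k hk1 hk1'
    · by_cases h : (M * N) i j = 0
      · exact Or.inl h
      obtain ⟨k, hk1, hk2⟩ := exists_of_mul_ne_zero h
      have hsum : (M * N) i j = M i k * N k j := by
        rw [Matrix.mul_apply]
        refine Finset.sum_eq_single k (fun b _ hb => ?_) (by simp)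
        by_cases hbz : M i b = 0
        · simp [hbz]
        · exact absurd (hMr i hbz hk1) hb
      rw [hsum]
      exact (hMe i k).mul (hNe k j)

/-- The idempotent `ε_j ∈ Ḡ_n`: the diagonal matrix with `0` in position `(j,j)` and
`1` in the other diagonal positions. -/
noncomputable def epsEl (G : Type*) [Group G] {n : ℕ} (j : Fin n) : GBar G n :=
  ⟨Matrix.diagonal (fun i => if i = j then 0 else 1), by
    have key : ∀ a b : Fin n,
        Matrix.diagonal (fun i : Fin n => if i = j then (0 : GA G) else 1) a b ≠ 0 → a = b := by
      intro a b h
      by_contra hab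
      simp [Matrix.diagonal_apply_ne _ hab] at h
    refine ⟨fun i => ?_, fun k => ?_, fun i k => ?_⟩
    · intro a ha b hb
      exact (key i a ha).symm.trans (key i b hb)
    · intro a ha b hb
      exact (key a k ha).trans (key b k hb).symm
    · by_cases h : i = k
      · subst h
        by_cases hij : i = j
        · exact Or.inl (by simp [Matrix.diagonal_apply_eq, hij])
        · exact Or.inr ⟨1, by simp [Matrix.diagonal_apply_eq, hij, MonoidAlgebra.one_def]⟩
      · exact Or.inl (by simp [Matrix.diagonal_apply_ne _ h])⟩

/-- The action of `S_n` on `G^n` by permuting coordinates. -/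
def permHom (G : Type*) [Group G] (n : ℕ) : Equiv.Perm (Fin n) →* MulAut (Fin n → G) where
  toFun σ :=
    { toFun := fun g => g ∘ σ.symm
      invFun := fun g => g ∘ σ
      left_inv := fun g => by ext i; simp
      right_inv := fun g => by ext i; simp
      map_mul' := fun g h => rfl }
  map_one' := by ext g i; simp; rfl
  map_mul' := fun σ τ => by ext g i; simp [Equiv.Perm.mul_def]

/-- The wreath product `G_n = G^n ⋊ S_n`. -/
abbrev Wreath (G : Type*) [Group G] (n : ℕ) :=
  SemidirectProduct (Fin n → G) (Equiv.Perm (Fin n)) (permHom G n)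

/-- The monoid embedding of the wreath product `G_n` into the matrices over `G ∪ {0}`:
`(g,σ)` goes to the matrix whose `(i,j)` entry is `g_i` if `σ(j) = i` and `0` otherwise. -/
noncomputable def wreathHom (G : Type*) [Group G] (n : ℕ) :
    Wreath G n →* Matrix (Fin n) (Fin n) (GA G) where
  toFun x := Matrix.of fun i j => if x.right j = i then single (x.left i) 1 else 0
  map_one' := by
    apply Matrix.ext
    intro i j
    by_cases h : i = j <;>
      simp [Matrix.one_apply, h, MonoidAlgebra.one_def, eq_comm]
  map_mul' := by
    rintro ⟨a, σ⟩ ⟨b, τ⟩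
    apply Matrix.ext
    intro i j
    rw [Matrix.mul_apply, Finset.sum_eq_single (τ j)]
    · simp only [SemidirectProduct.mul_left, SemidirectProduct.mul_right, Matrix.of_apply]
      rw [Equiv.Perm.mul_apply]
      by_cases h : σ (τ j) = i
      · rw [if_pos h, if_pos h]
        simp only [if_true]
        rw [MonoidAlgebra.single_mul_single]
        congr 1
        have hs : σ.symm i = τ j := by rw [← h]; simp
        simp [permHom, Pi.mul_apply, hs]
      · rw [if_neg h, if_neg h, zero_mul]
    · intro b' _ hb'
      simp only [Matrix.of_apply]
      exact mul_eq_zero_of_right _ (if_neg fun hc => hb' hc.symm)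
    · simp

theorem wreathHom_mem_GBar (G : Type*) [Group G] (n : ℕ) (x : Wreath G n) :
    wreathHom G n x ∈ GBar G n := by
  have key : ∀ i j : Fin n, wreathHom G n x i j ≠ 0 → x.right j = i := by
    intro i j h
    by_contra hc
    simp [wreathHom, hc] at h
  refine ⟨fun i => ?_, fun j => ?_, fun i j => ?_⟩
  · intro a ha b hb
    exact x.right.injective ((key i a ha).trans (key i b hb).symm)
  · intro a ha b hb
    exact (key a j ha).symm.trans (key b j hb)
  · by_cases h : x.right j = i
    · exact Or.inr ⟨x.left i, by simp [wreathHom, h]⟩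
    · exact Or.inl (by simp [wreathHom, h])

/-- The wreath product `G_n` as the submonoid of `Ḡ_n` of matrices with exactly one
nonzero entry in each row and each column. -/
noncomputable def GFull (G : Type*) [Group G] (n : ℕ) :
    Submonoid (Matrix (Fin n) (Fin n) (GA G)) :=
  MonoidHom.mrange (wreathHom G n)

theorem GFull_le_GBar (G : Type*) [Group G] (n : ℕ) : GFull G n ≤ GBar G n := by
  rintro M ⟨x, rfl⟩
  exact wreathHom_mem_GBar G n x

/-- An element of the wreath product, viewed inside `Ḡ_n`. -/
noncomputable def wEl {G : Type*} [Group G] {n : ℕ} (x : Wreath G n) : GBar G n :=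
  ⟨wreathHom G n x, wreathHom_mem_GBar G n x⟩
open scoped Classical

/-- A partition-valued function `ρ = (ρ(C))_{C ∈ G_*}` on the set of conjugacy classes of
`G`, encoded as the multiset of pairs (conjugacy class, part): `ρ(C)` is the multiset of
parts attached to the class `C`. -/
abbrev PartFun (G : Type*) [Group G] := Multiset (ConjClasses G × ℕ+)

/-- `‖ρ‖ = Σ_{C} |ρ(C)|`, the total size of a partition-valued function. -/
def PartFun.size {G : Type*} [Group G] (ρ : PartFun G) : ℕ :=
  (ρ.map fun p => ((p.2 : ℕ))).sum

/-- The data indexing the summands of `C_{n}^{ρ}` (for `ρ` presented as a list `l` of its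
parts): for each part a sequence of indices in `{1,…,n}`, all of them pairwise distinct,
together with `g ∈ G^n` such that each cycle-product lies in the prescribed conjugacy
class and `g_j = 1` for `j` outside the chosen indices. -/
abbrev CnData (G : Type*) [Group G] [Fintype G] (n : ℕ) (l : List (ConjClasses G × ℕ+)) :=
  { d : ((i : Fin l.length) → Fin ((l.get i).2 : ℕ) → Fin n) × (Fin n → G) //
    Function.Injective
      (fun p : Σ i : Fin l.length, Fin ((l.get i).2 : ℕ) => d.1 p.1 p.2) ∧
    (∀ i : Fin l.length,
      ConjClasses.mk ((List.ofFn fun j => d.2 (d.1 i j)).reverse.prod) = (l.get i).1) ∧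
    (∀ k : Fin n,
      (∀ p : Σ i : Fin l.length, Fin ((l.get i).2 : ℕ), d.1 p.1 p.2 ≠ k) → d.2 k = 1) }

/-- The element of `G_n` determined by a summand datum: the permutation is the product of
the cycles `(d_i(0), d_i(1), …)` and the group part is the chosen `g ∈ G^n`. -/
noncomputable def CnData.elem {G : Type*} [Group G] [Fintype G] {n : ℕ}
    {l : List (ConjClasses G × ℕ+)} (d : CnData G n l) : Wreath G n :=
  ⟨d.1.2,
    (Equiv.Perm.extendDomain
      (Equiv.sigmaCongrRight fun i : Fin l.length => finRotate ((l.get i).2 : ℕ))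
      (Equiv.ofInjective _ d.2.1))⟩

/-- The element `C_{n,•}^{ρ}` of `F[G_n]` associated with a list presentation of `ρ`:
the sum of `C_{n,T}^{ρ}` over all `‖ρ‖`-subsets `T` of `{1,…,n}` (the subset `T` being
recovered as the image of the index sequences). -/
noncomputable def CnList (F : Type*) [Field F] (G : Type*) [Group G] [Fintype G] (n : ℕ)
    (l : List (ConjClasses G × ℕ+)) : MonoidAlgebra F (Wreath G n) :=
  haveI : Fintype (CnData G n l) := Fintype.ofFinite _
  ∑ d : CnData G n l, single d.elem (1 : F)

/-- The element `C_n^{ρ} ∈ F[G_n]`. -/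
noncomputable def Cn (F : Type*) [Field F] (G : Type*) [Group G] [Fintype G] (n : ℕ) (ρ : PartFun G) :
    MonoidAlgebra F (Wreath G n) :=
  CnList F G n ρ.toList

/-- The set `T ⊆ {1,…,n}` of indices used by a summand datum (the union of the supports
of the cycles). -/
noncomputable def CnData.T {G : Type*} [Group G] [Fintype G] {n : ℕ}
    {l : List (ConjClasses G × ℕ+)} (d : CnData G n l) : Finset (Fin n) :=
  Finset.univ.image (fun p : Σ i : Fin l.length, Fin ((l.get i).2 : ℕ) => d.1.1 p.1 p.2)

/-- `ε̄_T = Π_{i ∈ T} (1 − ε_i)` in `F[Ḡ_n]` (the factors pairwise commute; the product is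
taken in increasing order of the indices). -/
noncomputable def epsBarT (F : Type*) [Field F] {G : Type*} [Group G] {n : ℕ}
    (T : Finset (Fin n)) : MonoidAlgebra F (GBar G n) :=
  ((T.sort (· ≤ ·)).map fun i => 1 - single (epsEl G i) (1 : F)).prod

/-- `Δ_n^{ρ} = Σ_T C_{n,T}^{ρ} ε̄_T ∈ F[Ḡ_n]`, for `ρ` presented as a list of parts. -/
noncomputable def DeltaList (F : Type*) [Field F] (G : Type*) [Group G] [Fintype G] (n : ℕ)
    (l : List (ConjClasses G × ℕ+)) : MonoidAlgebra F (GBar G n) :=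
  haveI : Fintype (CnData G n l) := Fintype.ofFinite _
  ∑ d : CnData G n l, single (wEl d.elem) (1 : F) * epsBarT F d.T

/-- The element `Δ_n^{ρ} ∈ F[Ḡ_n]`. -/
noncomputable def Delta (F : Type*) [Field F] (G : Type*) [Group G] [Fintype G] (n : ℕ)
    (ρ : PartFun G) : MonoidAlgebra F (GBar G n) :=
  DeltaList F G n ρ.toList

/-- The upper-left `n × n` corner of a matrix in `Ḡ_{n+1}`, an element of `Ḡ_n`. -/
def corner {G : Type*} [Group G] {n : ℕ} (γ : GBar G (n + 1)) : GBar G n :=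
  ⟨(γ : Matrix (Fin (n+1)) (Fin (n+1)) (GA G)).submatrix Fin.castSucc Fin.castSucc, by
    obtain ⟨hr, hc, he⟩ := γ.2
    refine ⟨fun i => fun a ha b hb => ?_, fun j => fun a ha b hb => ?_,
      fun i j => he _ _⟩
    · exact Fin.castSucc_injective n
        (hr (Fin.castSucc i) ha hb)
    · exact Fin.castSucc_injective n
        (hc (Fin.castSucc j) ha hb)⟩

/-!
Write `Δ_{n+1}^ρ = Σ_d w_d ε̄_{T_d}`. If `n + 1 ∈ T_d`, the product `ε̄_{T_d}` ends with
the factor `1 - ε_{n+1}`, and `θ` kills it because `γ ε_{n+1}` and `γ` have the same corner.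
Otherwise `d` comes from a datum on `{1, …, n}`; then `w_d` and all the `ε_i` have their last
column zero above the diagonal, a submonoid on which taking corners is multiplicative, so `θ`
sends the summand to the corresponding summand of `Δ_n^ρ`.
-/

namespace MonoidAlgebra

variable {k M N : Type*} [Ring k]

theorem mapDomain_sub (f : M → N) (x y : MonoidAlgebra k M) :
    mapDomain f (x - y) = mapDomain f x - mapDomain f y :=
  map_sub (mapDomainLinearMap k k f) x y

theorem mapDomain_finset_sum {ι : Type*} (f : M → N) (s : Finset ι)
    (x : ι → MonoidAlgebra k M) :
    mapDomain f (∑ i ∈ s, x i) = ∑ i ∈ s, mapDomain f (x i) :=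
  map_sum (mapDomainLinearMap k k f) x s

variable [Monoid M] [Monoid N]

theorem mapDomain_mul_one_sub_single_eq_zero (f : M → N) {e : M} (he : ∀ m, f (m * e) = f m)
    (a : MonoidAlgebra k M) : mapDomain f (a * (1 - single e 1)) = 0 := by
  induction a using MonoidAlgebra.induction_linear with
  | zero => simp
  | add x y hx hy => rw [add_mul, mapDomain_add, hx, hy, add_zero]
  | single m r => simp [mul_sub, single_mul_single, mapDomain_sub, he]

theorem mapDomain_single_mul_prod_one_sub_single (S : Submonoid M) (f : M → N)
    (hf : ∀ a ∈ S, ∀ b, f (a * b) = f a * f b) {a : M} (ha : a ∈ S) (L : List M)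
    (hL : ∀ e ∈ L, e ∈ S) :
    mapDomain f (single a (1 : k) * (L.map fun e => 1 - single e 1).prod)
      = single (f a) 1 * (L.map fun e => 1 - single (f e) 1).prod := by
  induction L generalizing a with
  | nil => simp
  | cons e L ih =>
    have he : e ∈ S := hL e List.mem_cons_self
    have hL' : ∀ e ∈ L, e ∈ S := fun e' h => hL e' (List.mem_cons_of_mem e h)
    simp only [List.map_cons, List.prod_cons, ← mul_assoc, mul_sub, mul_one, sub_mul,
      single_mul_single, mapDomain_sub, ih ha hL', ih (S.mul_mem ha he) hL', hf a ha e]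

end MonoidAlgebra

theorem Finset.sort_eq_sort_erase_append {α : Type*} [LinearOrder α] {s : Finset α} {a : α}
    (ha : a ∈ s) (hmax : ∀ b ∈ s, b ≤ a) : s.sort = (s.erase a).sort ++ [a] := by
  classical
  have hs : ((s.erase a).sort ++ [a]).toFinset = s := by
    simp [List.toFinset_append, Finset.insert_erase ha]
  have hnodup : ((s.erase a).sort ++ [a]).Nodup := by
    simp +contextual [List.nodup_append, Finset.sort_nodup]
  conv_lhs => rw [← hs]
  refine (List.toFinset_sort _ hnodup).mpr (List.pairwise_append.mpr ⟨Finset.pairwise_sort _ _,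
    List.pairwise_singleton _ _, fun b hb c hc => ?_⟩)
  rw [List.mem_singleton.mp hc]
  exact hmax b (Finset.mem_of_mem_erase (Finset.mem_sort _ |>.mp hb))

namespace GBar

variable {G : Type*} [Group G] {n : ℕ}

def lastColDiag (G : Type*) [Group G] (n : ℕ) : Submonoid (GBar G (n + 1)) where
  carrier := {γ | ∀ i : Fin n,
    (γ : Matrix (Fin (n + 1)) (Fin (n + 1)) (GA G)) i.castSucc (Fin.last n) = 0}
  one_mem' i := Matrix.one_apply_ne (Fin.castSucc_lt_last i).ne
  mul_mem' {γ δ} hγ hδ i := by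
    change ((γ : Matrix (Fin (n + 1)) (Fin (n + 1)) (GA G)) * δ) i.castSucc (Fin.last n) = 0
    rw [Matrix.mul_apply, Fin.sum_univ_castSucc, hγ i, zero_mul, add_zero]
    exact Finset.sum_eq_zero fun k _ => by rw [hδ k, mul_zero]

theorem corner_mul {γ : GBar G (n + 1)} (hγ : γ ∈ lastColDiag G n) (δ : GBar G (n + 1)) :
    corner (γ * δ) = corner γ * corner δ := by
  ext i j : 2
  change ((γ : Matrix (Fin (n + 1)) (Fin (n + 1)) (GA G)) * δ) i.castSucc j.castSucc = _
  rw [Matrix.mul_apply, Fin.sum_univ_castSucc, hγ i, zero_mul, add_zero]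
  rfl

theorem epsEl_mem_lastColDiag (j : Fin (n + 1)) : epsEl G j ∈ lastColDiag G n :=
  fun i => Matrix.diagonal_apply_ne (fun k => if k = j then (0 : GA G) else 1)
    (Fin.castSucc_lt_last i).ne

theorem corner_epsEl_castSucc (j : Fin n) : corner (epsEl G j.castSucc) = epsEl G j := by
  ext a b : 2
  change (Matrix.diagonal fun k : Fin (n + 1) => if k = j.castSucc then (0 : GA G) else 1)
    a.castSucc b.castSucc = (Matrix.diagonal fun k : Fin n => if k = j then (0 : GA G) else 1) a b
  simp [Matrix.diagonal_apply]

theorem corner_mul_epsEl_last (γ : GBar G (n + 1)) :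
    corner (γ * epsEl G (Fin.last n)) = corner γ := by
  ext i j : 2
  change ((γ : Matrix (Fin (n + 1)) (Fin (n + 1)) (GA G)) *
    Matrix.diagonal fun k => if k = Fin.last n then (0 : GA G) else 1) i.castSucc j.castSucc = _
  simp only [Matrix.mul_diagonal, (Fin.castSucc_lt_last j).ne, ↓reduceIte, mul_one]
  rfl

end GBar

section Corner

variable {G : Type*} [Group G] {n : ℕ}

theorem wEl_apply (x : Wreath G n) (i j : Fin n) :
    (wEl x : Matrix (Fin n) (Fin n) (GA G)) i j =
      if x.right j = i then single (x.left i) 1 else 0 :=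
  rfl

theorem wEl_mem_lastColDiag {x : Wreath G (n + 1)} (hx : x.right (Fin.last n) = Fin.last n) :
    wEl x ∈ GBar.lastColDiag G n := fun i => by
  rw [wEl_apply, hx, if_neg (Fin.castSucc_lt_last i).ne']

theorem corner_wEl {x : Wreath G (n + 1)} {y : Wreath G n}
    (hright : ∀ j, x.right j.castSucc = (y.right j).castSucc)
    (hleft : ∀ i, x.left i.castSucc = y.left i) : corner (wEl x) = wEl y := by
  ext i j : 2
  change (wEl x : Matrix (Fin (n + 1)) (Fin (n + 1)) (GA G)) i.castSucc j.castSucc = _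
  simp only [wEl_apply, hright, hleft, Fin.castSucc_inj]

variable {F : Type*} [Field F]

theorem mapDomain_corner_mul_epsBarT_of_last_mem (a : MonoidAlgebra F (GBar G (n + 1)))
    {T : Finset (Fin (n + 1))} (hT : Fin.last n ∈ T) :
    mapDomain corner (a * epsBarT F T) = 0 := by
  rw [epsBarT, Finset.sort_eq_sort_erase_append hT fun i _ => Fin.le_last i, List.map_append,
    List.prod_append, ← mul_assoc, List.map_singleton, List.prod_singleton]
  exact mapDomain_mul_one_sub_single_eq_zero _ GBar.corner_mul_epsEl_last _

theorem mapDomain_corner_single_mul_epsBarT_map_castSucc {γ : GBar G (n + 1)}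
    (hγ : γ ∈ GBar.lastColDiag G n) (T : Finset (Fin n)) :
    mapDomain corner (single γ (1 : F) * epsBarT F (T.map Fin.castSuccEmb)) =
      single (corner γ) 1 * epsBarT F T := by
  have hsort : (T.map Fin.castSuccEmb).sort = T.sort.map Fin.castSucc :=
    (Fin.strictMono_castSucc.strictMonoOn _).map_finsetSort.symm
  have hL : ∀ e ∈ T.sort.map fun j => epsEl G j.castSucc, e ∈ GBar.lastColDiag G n := by
    simp [GBar.epsEl_mem_lastColDiag]
  have := mapDomain_single_mul_prod_one_sub_single (k := F) _ corner
    (fun _ ha b => GBar.corner_mul ha b) hγ _ hL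
  simp only [List.map_map, Function.comp_def, GBar.corner_epsEl_castSucc] at this
  rw [epsBarT, epsBarT, hsort, List.map_map]
  exact this

end Corner

namespace CnData

variable {G : Type*} [Group G] [Fintype G] {n : ℕ} {l : List (ConjClasses G × ℕ+)}

theorem mem_T {d : CnData G n l} {k : Fin n} :
    k ∈ d.T ↔ ∃ p : Σ i : Fin l.length, Fin ((l.get i).2 : ℕ), d.1.1 p.1 p.2 = k := by
  simp [CnData.T]

theorem elem_right_apply_index (d : CnData G n l)
    (p : Σ i : Fin l.length, Fin ((l.get i).2 : ℕ)) :
    d.elem.right (d.1.1 p.1 p.2) = d.1.1 p.1 (finRotate _ p.2) := by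
  simpa [CnData.elem] using Equiv.Perm.extendDomain_apply_image
    (Equiv.sigmaCongrRight fun i : Fin l.length => finRotate ((l.get i).2 : ℕ))
    (Equiv.ofInjective _ d.2.1) p

theorem elem_right_apply_of_not_mem_T (d : CnData G n l) {k : Fin n} (hk : k ∉ d.T) :
    d.elem.right k = k :=
  Equiv.Perm.extendDomain_apply_not_subtype _ _ fun ⟨p, hp⟩ => hk (mem_T.mpr ⟨p, hp⟩)

def castSucc (d : CnData G n l) : CnData G (n + 1) l := by
  refine ⟨⟨fun i j => (d.1.1 i j).castSucc, Fin.snoc d.1.2 1⟩, ?_, ?_, ?_⟩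
  · exact fun p q hpq => d.2.1 (Fin.castSucc_injective _ hpq)
  · intro i
    simpa [Fin.snoc_castSucc] using d.2.2.1 i
  · intro k
    refine Fin.lastCases (fun _ => ?_) (fun k' hk => ?_) k
    · exact Fin.snoc_last (α := fun _ => G) _ _
    · exact (Fin.snoc_castSucc (α := fun _ => G) _ _ _).trans
        (d.2.2.2 k' fun p hp => hk p (congrArg Fin.castSucc hp))

theorem castSucc_injective :
    Function.Injective (castSucc : CnData G n l → CnData G (n + 1) l) := by
  intro d d' h
  obtain ⟨hidx, hg⟩ := Prod.ext_iff.mp (congrArg Subtype.val h)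
  refine Subtype.ext (Prod.ext ?_ ?_)
  · funext i j
    exact Fin.castSucc_injective _ (congrFun (congrFun hidx i) j)
  · funext k
    simpa [castSucc] using congrFun hg k.castSucc

theorem exists_castSucc_eq {d : CnData G (n + 1) l} (hd : Fin.last n ∉ d.T) :
    ∃ d' : CnData G n l, d'.castSucc = d := by
  have hne : ∀ p : Σ i : Fin l.length, Fin ((l.get i).2 : ℕ), d.1.1 p.1 p.2 ≠ Fin.last n :=
    fun p hp => hd (mem_T.mpr ⟨p, hp⟩)
  refine ⟨⟨⟨fun i j => (d.1.1 i j).castPred (hne ⟨i, j⟩), fun k => d.1.2 k.castSucc⟩,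
    fun p q hpq => d.2.1 (by simpa using congrArg Fin.castSucc hpq),
    fun i => by simpa using d.2.2.1 i,
    fun k hk => d.2.2.2 k.castSucc fun p hp => hk p (by simp [hp])⟩, ?_⟩
  refine Subtype.ext (Prod.ext
    (funext fun i => funext fun j => Fin.castSucc_castPred _ (hne ⟨i, j⟩)) ?_)
  funext k
  refine Fin.lastCases ?_ (fun k' => ?_) k
  · exact (Fin.snoc_last (α := fun _ => G) _ _).trans (d.2.2.2 _ hne).symm
  · exact Fin.snoc_castSucc (α := fun _ => G) _ _ _

theorem T_castSucc (d : CnData G n l) : d.castSucc.T = d.T.map Fin.castSuccEmb := by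
  ext k
  simp [mem_T, castSucc]

theorem elem_right_castSucc_castSucc (d : CnData G n l) (j : Fin n) :
    d.castSucc.elem.right j.castSucc = (d.elem.right j).castSucc := by
  by_cases hj : j ∈ d.T
  · obtain ⟨p, rfl⟩ := mem_T.mp hj
    exact (elem_right_apply_index d.castSucc p).trans
      (congrArg Fin.castSucc (elem_right_apply_index d p)).symm
  · have hj' : j.castSucc ∉ d.castSucc.T := by simpa [T_castSucc] using hj
    rw [elem_right_apply_of_not_mem_T _ hj', elem_right_apply_of_not_mem_T _ hj]

theorem elem_right_castSucc_last (d : CnData G n l) :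
    d.castSucc.elem.right (Fin.last n) = Fin.last n :=
  elem_right_apply_of_not_mem_T _ (by simp [T_castSucc, Fin.castSucc_ne_last])

theorem corner_wEl_elem_castSucc (d : CnData G n l) :
    corner (wEl d.castSucc.elem) = wEl d.elem :=
  corner_wEl d.elem_right_castSucc_castSucc fun _ => Fin.snoc_castSucc (α := fun _ => G) _ _ _

theorem sum_eq_sum_castSucc {M : Type*} [AddCommMonoid M] [Fintype (CnData G (n + 1) l)]
    [Fintype (CnData G n l)] (f : CnData G (n + 1) l → M)
    (hf : ∀ d, Fin.last n ∈ d.T → f d = 0) :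
    ∑ d, f d = ∑ d : CnData G n l, f d.castSucc := by
  have hsupp : ∀ d ∉ Finset.univ.map ⟨castSucc, castSucc_injective⟩, f d = 0 := by
    refine fun d hd => hf d (by_contra fun hlast => ?_)
    obtain ⟨d', rfl⟩ := exists_castSucc_eq hlast
    exact hd (Finset.mem_map_of_mem _ (Finset.mem_univ d'))
  rw [← Finset.sum_subset (Finset.subset_univ _) fun d _ hd => hsupp d hd, Finset.sum_map]
  rfl

end CnData

/-- The canonical projection `θ_{n+1} : F[Ḡ_{n+1}] → F[Ḡ_n]`, the linear extension of
taking upper-left corners, maps `Δ_{n+1}^{ρ}` to `Δ_n^{ρ}` for every partition-valued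
function `ρ` (with the convention `Δ_k^{ρ} = 0` for `‖ρ‖ > k`, automatic here). -/
theorem theta_Delta (F : Type*) [Field F] (G : Type*) [Group G] [Fintype G] (n : ℕ)
    (ρ : PartFun G) :
    MonoidAlgebra.mapDomain corner (Delta F G (n + 1) ρ) = Delta F G n ρ := by
  -- the sums defining `Delta` are taken with the `Fintype.ofFinite` instance
  let _ : Fintype (CnData G (n + 1) ρ.toList) := Fintype.ofFinite _
  let _ : Fintype (CnData G n ρ.toList) := Fintype.ofFinite _
  rw [Delta, Delta, DeltaList, DeltaList, mapDomain_finset_sum,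
    CnData.sum_eq_sum_castSucc _ fun d hd => mapDomain_corner_mul_epsBarT_of_last_mem _ hd]
  refine Finset.sum_congr rfl fun d _ => ?_
  rw [CnData.T_castSucc, mapDomain_corner_single_mul_epsBarT_map_castSucc
    (wEl_mem_lastColDiag d.elem_right_castSucc_last), d.corner_wEl_elem_castSucc]
end

section
/- The restriction of the linear map θ_n: F[Ḡ_n] → F[Ḡ_{n-1}] (upper-left corner) to the subspace of the center of F[Ḡ_n] spanned by elements of degree at most n−1 is injective. -/
open MonoidAlgebra

open scoped Classical

/-- `deg(γ) = |{k | γ_{kk} ≠ 1}|`. -/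
noncomputable def matDeg {G : Type*} [Group G] {n : ℕ}
    (M : Matrix (Fin n) (Fin n) (GA G)) : ℕ :=
  (Finset.univ.filter fun k : Fin n => M k k ≠ 1).card

/-!
Let `z` be central, of degree at most `n`, with `θ z = 0`, and let `ε_I` be the diagonal idempotent
with ones on `I`. For `ε = ε_I` with `I` all indices but the last, `ε γ ε` only depends on the
corner of `γ`, so `z ε = ε z ε = 0`. Conjugating by permutation matrices and multiplying by
idempotents gives `z ε_I = 0` for every proper `I`. If `π` has a zero row, the coefficient of `π` in
`ε_{rows π} z ε_{cols π} = z ε_{rows π ∩ cols π} = 0` is the sum of the coefficients of `z` at all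
matrices extending `π`.

Every `β` is `κ + 1_S`, where the core `κ` is `β` with its diagonal ones removed and `S` is a set of
indices whose row and column vanish in `κ`. By induction on the rows of the core, the relations at
the `κ + 1_T` with `T` proper become Möbius relations among the `z(κ + 1_S)`; together with
`z κ = 0` (a matrix without diagonal ones has degree `n + 1`) they force all of them to vanish.
-/

namespace Finset

variable {X R : Type*} [DecidableEq X] [CommRing R]

theorem sum_neg_one_pow_card_mul_sum_supsets (Δ : Finset X) (g : Finset X → R) :
    ∑ T ∈ Δ.powerset, (-1) ^ #T * ∑ S ∈ Δ.powerset with T ⊆ S, g S = g ∅ := by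
  calc ∑ T ∈ Δ.powerset, (-1) ^ #T * ∑ S ∈ Δ.powerset with T ⊆ S, g S
      = ∑ S ∈ Δ.powerset, (∑ T ∈ S.powerset, (-1 : R) ^ #T) * g S := by
        simp_rw [mul_sum, sum_mul]
        refine sum_comm' fun T S => ?_
        simp only [mem_filter, mem_powerset]
        exact ⟨fun h => ⟨h.2.2, h.2.1⟩, fun h => ⟨h.1.trans h.2, h.2, h.1⟩⟩
    _ = g ∅ := by
        have hsign : ∀ S : Finset X, ∑ T ∈ S.powerset, (-1 : R) ^ #T = if S = ∅ then 1 else 0 := by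
          intro S
          exact_mod_cast congrArg (Int.cast : ℤ → R) sum_powerset_neg_one_pow_card
        simp [hsign]

theorem eq_zero_of_sum_supsets_eq_zero {Δ : Finset X} {g : Finset X → R} (h₀ : g ∅ = 0)
    (h : ∀ T ⊂ Δ, ∑ S ∈ Δ.powerset with T ⊆ S, g S = 0) : ∀ S ⊆ Δ, g S = 0 := by
  have htop : g Δ = 0 := by
    have halt := sum_neg_one_pow_card_mul_sum_supsets Δ g
    rw [h₀, sum_eq_single_of_mem Δ (mem_powerset_self Δ) fun T hT hne =>
      by rw [h T (ssubset_of_subset_of_ne (mem_powerset.1 hT) hne), mul_zero]] at halt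
    have hΔ : ({S ∈ Δ.powerset | Δ ⊆ S} : Finset _) = {Δ} := by
      ext S; simp only [mem_filter, mem_powerset, mem_singleton]
      exact ⟨fun h => h.1.antisymm h.2, fun h => ⟨h.le, h.ge⟩⟩
    simpa [hΔ] using halt
  intro S hS
  refine strongDownwardInduction (n := #Δ) (p := fun S => S ⊆ Δ → g S = 0)
    (fun S ih _ hS => ?_) S (card_le_card hS) hS
  obtain rfl | hne := eq_or_ne S Δ
  · exact htop
  have hsum := h S (ssubset_of_subset_of_ne hS hne)
  rwa [sum_eq_single_of_mem S (mem_filter.2 ⟨mem_powerset.2 hS, subset_rfl⟩)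
    fun U hU hUS => ?_] at hsum
  rw [mem_filter, mem_powerset] at hU
  exact ih (card_le_card hU.1) (ssubset_of_subset_of_ne hU.2 (Ne.symm hUS)) hU.1

end Finset

theorem MonoidAlgebra.single_one_mul_mul_single_one {R M : Type*} [Semiring R] [Monoid M]
    (a b : M) (x : MonoidAlgebra R M) :
    single a 1 * x * single b 1 = mapDomain (fun y => a * y * b) x := by
  induction x using MonoidAlgebra.induction_linear with
  | zero => simp
  | add x y hx hy => rw [mul_add, add_mul, hx, hy, mapDomain_add]
  | single y r => simp [single_mul_single]

theorem MonoidAlgebra.coeff_eq_zero_of_mem_span_single {R M : Type*} [Semiring R] {p : M → Prop}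
    {x : MonoidAlgebra R M} (hx : x ∈ Submodule.span R {y | ∃ a, p a ∧ y = single a 1})
    {a : M} (ha : ¬p a) : x.coeff a = 0 := by
  induction hx using Submodule.span_induction with
  | mem y hy =>
    obtain ⟨b, hb, rfl⟩ := hy
    exact Finsupp.single_eq_of_ne (fun h => ha (h ▸ hb))
  | zero => rfl
  | add y w _ _ hy hw => rw [coeff_add, Finsupp.add_apply, hy, hw, add_zero]
  | smul r y _ hy => rw [coeff_smul, Finsupp.smul_apply, hy, smul_zero]

section IsRC

variable {G : Type*} [Group G] {m : ℕ}

theorem IsRC.of_forall_ne_zero_eq {M N : Matrix (Fin m) (Fin m) (GA G)} (hN : IsRC N)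
    (h : ∀ i j, M i j ≠ 0 → M i j = N i j) : IsRC M := by
  obtain ⟨hr, hc, he⟩ := hN
  refine ⟨fun i a ha b hb => ?_, fun j a ha b hb => ?_, fun i j => ?_⟩
  · exact hr i (show N i a ≠ 0 from h i a ha ▸ ha) (show N i b ≠ 0 from h i b hb ▸ hb)
  · exact hc j (show N a j ≠ 0 from h a j ha ▸ ha) (show N b j ≠ 0 from h b j hb ▸ hb)
  · by_cases hM : M i j = 0
    · exact Or.inl hM
    · exact h i j hM ▸ he i j

theorem isRC_diagonal {d : Fin m → GA G} (hd : ∀ i, IsEnt (d i)) :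
    IsRC (Matrix.diagonal d) := by
  have hdiag : ∀ a b, Matrix.diagonal d a b ≠ 0 → a = b := fun a b h => by
    by_contra hab
    exact h (Matrix.diagonal_apply_ne _ hab)
  refine ⟨fun i a ha b hb => (hdiag i a ha).symm.trans (hdiag i b hb),
    fun j a ha b hb => (hdiag a j ha).trans (hdiag b j hb).symm, fun i j => ?_⟩
  obtain rfl | hij := eq_or_ne i j
  · simpa using hd i
  · exact Or.inl (Matrix.diagonal_apply_ne _ hij)

theorem IsRC.add {M N : Matrix (Fin m) (Fin m) (GA G)} (hM : IsRC M) (hN : IsRC N)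
    (hrow : ∀ i j j', M i j ≠ 0 → N i j' = 0) (hcol : ∀ i i' j, M i j ≠ 0 → N i' j = 0) :
    IsRC (M + N) := by
  refine ⟨fun i a ha b hb => ?_, fun j a ha b hb => ?_, fun i j => ?_⟩
  · simp only [Set.mem_ofPred_eq, Matrix.add_apply] at ha hb
    by_cases hi : ∃ c, M i c ≠ 0
    · obtain ⟨c, hc⟩ := hi
      rw [hrow i c a hc, add_zero] at ha
      rw [hrow i c b hc, add_zero] at hb
      exact hM.1 i ha hb
    · push Not at hi
      rw [hi, zero_add] at ha hb
      exact hN.1 i ha hb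
  · simp only [Set.mem_ofPred_eq, Matrix.add_apply] at ha hb
    by_cases hj : ∃ c, M c j ≠ 0
    · obtain ⟨c, hc⟩ := hj
      rw [hcol c a j hc, add_zero] at ha
      rw [hcol c b j hc, add_zero] at hb
      exact hM.2.1 j ha hb
    · push Not at hj
      rw [hj, zero_add] at ha hb
      exact hN.2.1 j ha hb
  · rw [Matrix.add_apply]
    by_cases hij : M i j = 0
    · rw [hij, zero_add]; exact hN.2.2 i j
    · rw [hrow i j j hij, add_zero]; exact hM.2.2 i j

end IsRC

namespace GBar

open Finset

variable {G : Type*} [Group G] {m : ℕ}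

noncomputable def proj (I : Finset (Fin m)) : GBar G m :=
  ⟨Matrix.diagonal fun i => if i ∈ I then 1 else 0, isRC_diagonal fun i => by
    split_ifs
    · exact Or.inr ⟨1, rfl⟩
    · exact Or.inl rfl⟩

theorem coe_proj (I : Finset (Fin m)) :
    ((proj I : GBar G m) : Matrix (Fin m) (Fin m) (GA G)) =
      Matrix.diagonal fun i => if i ∈ I then 1 else 0 :=
  rfl

theorem proj_mul_proj (I J : Finset (Fin m)) : (proj I * proj J : GBar G m) = proj (I ∩ J) := by
  refine Subtype.ext ?_
  simp only [Submonoid.coe_mul, coe_proj, Matrix.diagonal_mul_diagonal, mem_inter,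
    ite_zero_mul_ite_zero, one_mul]

theorem proj_mul_mul_proj_apply (I J : Finset (Fin m)) (β : GBar G m) (i j : Fin m) :
    (proj I * β * proj J).1 i j = if i ∈ I ∧ j ∈ J then β.1 i j else 0 := by
  simp only [Submonoid.coe_mul, coe_proj, Matrix.mul_diagonal, Matrix.diagonal_mul]
  split_ifs <;> simp_all

noncomputable def perm : Equiv.Perm (Fin m) →* GBar G m :=
  ((wreathHom G m).codRestrict (GBar G m) (wreathHom_mem_GBar G m)).comp SemidirectProduct.inr

theorem perm_apply (σ : Equiv.Perm (Fin m)) (i j : Fin m) :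
    (perm σ : GBar G m).1 i j = if σ j = i then 1 else 0 :=
  rfl

theorem perm_mul_proj (σ : Equiv.Perm (Fin m)) (I : Finset (Fin m)) :
    (perm σ * proj I : GBar G m) = proj (I.map σ.toEmbedding) * perm σ := by
  refine Subtype.ext <| Matrix.ext fun i j => ?_
  simp only [Submonoid.coe_mul, coe_proj, Matrix.mul_diagonal, Matrix.diagonal_mul, perm_apply]
  split_ifs <;> subst_vars <;> simp_all

def Extends (π β : GBar G m) : Prop := ∀ i j, π.1 i j ≠ 0 → β.1 i j = π.1 i j

theorem Extends.refl (π : GBar G m) : Extends π π := fun _ _ _ => rfl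

noncomputable def rows (π : GBar G m) : Finset (Fin m) := {i | ∃ j, π.1 i j ≠ 0}

noncomputable def cols (π : GBar G m) : Finset (Fin m) := {j | ∃ i, π.1 i j ≠ 0}

theorem proj_rows_mul_mul_proj_cols_eq_iff (π β : GBar G m) :
    proj (rows π) * β * proj (cols π) = π ↔ Extends π β := by
  have hrc : ∀ i j, π.1 i j ≠ 0 → i ∈ rows π ∧ j ∈ cols π := fun i j h =>
    ⟨mem_filter.2 ⟨mem_univ _, j, h⟩, mem_filter.2 ⟨mem_univ _, i, h⟩⟩
  constructor
  · intro h i j hπ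
    have := congrArg (fun γ : GBar G m => γ.1 i j) h
    simpa only [proj_mul_mul_proj_apply, if_pos (hrc i j hπ)] using this
  · intro h
    refine Subtype.ext <| Matrix.ext fun i j => ?_
    rw [proj_mul_mul_proj_apply]
    by_cases hπ : π.1 i j = 0
    · rw [hπ]
      split_ifs with hij
      · obtain ⟨j', hj'⟩ := (mem_filter.1 hij.1).2
        by_contra hβ
        have hjj' : j = j' := β.2.1 i hβ (show β.1 i j' ≠ 0 by rw [h i j' hj']; exact hj')
        exact hj' (hjj' ▸ hπ)
      · rfl
    · rw [if_pos (hrc i j hπ), h i j hπ]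

noncomputable def fixed (β : GBar G m) : Finset (Fin m) := {k | β.1 k k = 1}

noncomputable def core (β : GBar G m) : GBar G m :=
  ⟨Matrix.of fun i j => if i = j ∧ β.1 i j = 1 then 0 else β.1 i j,
    IsRC.of_forall_ne_zero_eq β.2 fun i j h => by
      simp only [Matrix.of_apply, ne_eq, ite_eq_left_iff, not_forall] at h ⊢
      obtain ⟨h, -⟩ := h
      exact if_neg h⟩

theorem core_apply (β : GBar G m) (i j : Fin m) :
    (core β).1 i j = if i = j ∧ β.1 i j = 1 then 0 else β.1 i j := rfl

noncomputable def free (κ : GBar G m) : Finset (Fin m) := (rows κ ∪ cols κ)ᶜ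

theorem apply_eq_zero_of_mem_free_left {κ : GBar G m} {i : Fin m} (hi : i ∈ free κ) (j : Fin m) :
    κ.1 i j = 0 := by
  by_contra h
  exact (mem_compl.1 hi) (mem_union_left _ (mem_filter.2 ⟨mem_univ _, j, h⟩))

theorem apply_eq_zero_of_mem_free_right {κ : GBar G m} {j : Fin m} (hj : j ∈ free κ) (i : Fin m) :
    κ.1 i j = 0 := by
  by_contra h
  exact (mem_compl.1 hj) (mem_union_right _ (mem_filter.2 ⟨mem_univ _, i, h⟩))

noncomputable def addOnes (κ : GBar G m) (S : Finset (Fin m)) : GBar G m :=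
  ⟨κ.1 + (proj (S ∩ free κ) : GBar G m).1, IsRC.add κ.2 (proj _).2
    (fun i j j' h => by
      rw [coe_proj, Matrix.diagonal_apply]
      split_ifs with hij hi
      · exact absurd (apply_eq_zero_of_mem_free_left (mem_inter.1 hi).2 j) h
      all_goals rfl)
    (fun i i' j h => by
      rw [coe_proj, Matrix.diagonal_apply]
      split_ifs with hij hi
      · exact absurd (apply_eq_zero_of_mem_free_right (mem_inter.1 (hij ▸ hi)).2 i) h
      all_goals rfl)⟩

theorem addOnes_apply (κ : GBar G m) (S : Finset (Fin m)) (i j : Fin m) :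
    (addOnes κ S).1 i j = if i = j ∧ i ∈ S ∩ free κ then 1 else κ.1 i j := by
  change κ.1 i j + (proj (S ∩ free κ) : GBar G m).1 i j = _
  rw [coe_proj, Matrix.diagonal_apply]
  by_cases h : i = j ∧ i ∈ S ∩ free κ
  · obtain ⟨rfl, hi⟩ := h
    rw [if_pos rfl, if_pos hi, if_pos ⟨rfl, hi⟩,
      apply_eq_zero_of_mem_free_left (mem_inter.1 hi).2, zero_add]
  · rw [if_neg h]
    split_ifs with hij hi
    · exact absurd ⟨hij, hi⟩ h
    all_goals exact add_zero _

theorem mem_fixed {β : GBar G m} {k : Fin m} : k ∈ fixed β ↔ β.1 k k = 1 := by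
  simp [fixed]

theorem core_core (β : GBar G m) : core (core β) = core β := by
  refine Subtype.ext <| Matrix.ext fun i j => ?_
  simp only [core_apply]
  split_ifs <;> simp_all

theorem fixed_core (β : GBar G m) : fixed (core β) = ∅ := by
  refine eq_empty_of_forall_notMem fun k hk => ?_
  rw [mem_fixed, core_apply] at hk
  split_ifs at hk with h
  · exact zero_ne_one hk
  · exact h ⟨rfl, hk⟩

theorem core_addOnes (κ : GBar G m) (S : Finset (Fin m)) : core (addOnes κ S) = core κ := by
  refine Subtype.ext <| Matrix.ext fun i j => ?_
  simp only [core_apply, addOnes_apply]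
  split_ifs <;> simp_all [apply_eq_zero_of_mem_free_left]

theorem fixed_subset_free_core (β : GBar G m) : fixed β ⊆ free (core β) := by
  intro k hk
  rw [mem_fixed] at hk
  have hβ : β.1 k k ≠ 0 := hk ▸ one_ne_zero
  simp only [free, rows, cols, mem_compl, mem_union, mem_filter, mem_univ, true_and, core_apply,
    not_or, not_exists, ne_eq, ite_eq_left_iff, not_forall, not_not]
  refine ⟨fun j hj => ?_, fun i hi => ?_⟩
  · by_contra h
    obtain rfl : k = j := β.2.1 k hβ h
    exact hj ⟨rfl, hk⟩
  · by_contra h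
    obtain rfl : i = k := β.2.2.1 k h hβ
    exact hi ⟨rfl, hk⟩

theorem addOnes_core_fixed (β : GBar G m) : addOnes (core β) (fixed β) = β := by
  refine Subtype.ext <| Matrix.ext fun i j => ?_
  simp only [addOnes_apply, core_apply, inter_eq_left.2 (fixed_subset_free_core β), mem_fixed]
  split_ifs with h₁ h₂
  · rw [← h₁.1, h₁.2]
  · exact absurd ⟨h₂.1, h₂.1 ▸ h₂.2⟩ h₁
  · rfl

theorem fixed_addOnes {κ : GBar G m} (hκ : fixed κ = ∅) (S : Finset (Fin m)) :
    fixed (addOnes κ S) = S ∩ free κ := by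
  ext k
  rw [mem_fixed, addOnes_apply]
  split_ifs with h
  · simpa using h.2
  · have hk : κ.1 k k ≠ 1 := fun hk => notMem_empty k (hκ ▸ mem_fixed.2 hk)
    simpa [hk] using h

theorem Extends.fixed_subset {π β : GBar G m} (h : Extends π β) : fixed π ⊆ fixed β := by
  intro k hk
  rw [mem_fixed] at hk ⊢
  rw [h k k (hk ▸ one_ne_zero), hk]

theorem Extends.core {π β : GBar G m} (h : Extends π β) : Extends (core π) (core β) := by
  intro i j hπ
  simp only [core_apply] at hπ ⊢
  by_cases hπ₁ : i = j ∧ π.1 i j = 1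
  · rw [if_pos hπ₁] at hπ
    exact absurd rfl hπ
  rw [if_neg hπ₁] at hπ ⊢
  rw [if_neg fun hβ₁ => hπ₁ ⟨hβ₁.1, h i j hπ ▸ hβ₁.2⟩]
  exact h i j hπ

theorem Extends.rows_ssubset {π β : GBar G m} (h : Extends π β) (hne : π ≠ β) :
    rows π ⊂ rows β := by
  have hsub : rows π ⊆ rows β := fun i hi => by
    obtain ⟨j, hj⟩ := (mem_filter.1 hi).2
    exact mem_filter.2 ⟨mem_univ _, j, h i j hj ▸ hj⟩
  obtain ⟨i, j, hij⟩ : ∃ i j, β.1 i j ≠ π.1 i j := by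
    by_contra! hc
    exact hne (Subtype.ext <| Matrix.ext fun i j => (hc i j).symm)
  have hπ : π.1 i j = 0 := by
    by_contra hπ
    exact hij (h i j hπ)
  have hβ : β.1 i j ≠ 0 := hπ ▸ hij
  refine (ssubset_iff_of_subset hsub).2 ⟨i, mem_filter.2 ⟨mem_univ _, j, hβ⟩, fun hi => ?_⟩
  obtain ⟨j', hj'⟩ := (mem_filter.1 hi).2
  obtain rfl : j = j' := β.2.1 i hβ (show β.1 i j' ≠ 0 from h i j' hj' ▸ hj')
  exact hj' hπ

theorem addOnes_extends_addOnes (κ : GBar G m) {T S : Finset (Fin m)} (hTS : T ⊆ S) :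
    Extends (addOnes κ T) (addOnes κ S) := by
  intro i j hT
  rw [addOnes_apply] at hT
  rw [addOnes_apply, addOnes_apply]
  by_cases hT₁ : i = j ∧ i ∈ T ∩ free κ
  · obtain ⟨hij, hiT, hi⟩ : i = j ∧ i ∈ T ∧ i ∈ free κ := ⟨hT₁.1, mem_inter.1 hT₁.2⟩
    rw [if_pos hT₁, if_pos ⟨hij, mem_inter.2 ⟨hTS hiT, hi⟩⟩]
  rw [if_neg hT₁] at hT ⊢
  rw [if_neg fun hS => hT (apply_eq_zero_of_mem_free_left (mem_inter.1 hS.2).2 j)]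

theorem rows_addOnes_ne_univ {κ : GBar G m} {T : Finset (Fin m)} (hT : T ⊂ free κ) :
    rows (addOnes κ T) ≠ univ := by
  obtain ⟨i, hi, hiT⟩ := exists_of_ssubset hT
  refine fun h => ?_
  obtain ⟨j, hj⟩ := (mem_filter.1 (h ▸ mem_univ i)).2
  rw [addOnes_apply, if_neg fun h' => hiT (mem_inter.1 h'.2).1] at hj
  exact hj (apply_eq_zero_of_mem_free_left hi j)

theorem addOnes_injOn {κ : GBar G m} (hκ : fixed κ = ∅) :
    Set.InjOn (addOnes κ) ((free κ).powerset : Set (Finset (Fin m))) := fun S hS T hT h => by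
  have := congrArg fixed h
  rwa [fixed_addOnes hκ, fixed_addOnes hκ, inter_eq_left.2 (mem_powerset.1 hS),
    inter_eq_left.2 (mem_powerset.1 hT)] at this

theorem sum_extends_addOnes {R : Type*} [AddCommMonoid R] (z : GBar G m →₀ R) {κ : GBar G m}
    (hκ : core κ = κ) {T : Finset (Fin m)} (hT : T ⊆ free κ)
    (ih : ∀ β, rows κ ⊂ rows (core β) → z β = 0) :
    ∑ β ∈ z.support with Extends (addOnes κ T) β, z β =
      ∑ S ∈ (free κ).powerset with T ⊆ S, z (addOnes κ S) := by
  have hfix : fixed κ = ∅ := hκ ▸ fixed_core κ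
  rw [← sum_image ((addOnes_injOn hfix).mono (coe_subset.2 (filter_subset _ _)))]
  refine sum_subset (fun β hβ => ?_) (fun β hβ hβ' => ?_)
  · obtain ⟨hβz, hext⟩ := mem_filter.1 hβ
    have hcore : core β = κ := by
      by_contra hne
      have hext' := hext.core
      rw [core_addOnes, hκ] at hext'
      exact Finsupp.mem_support_iff.1 hβz (ih β (hext'.rows_ssubset (Ne.symm hne)))
    have hTβ := hext.fixed_subset
    rw [fixed_addOnes hfix, inter_eq_left.2 hT] at hTβ
    refine mem_image.2 ⟨fixed β, mem_filter.2 ⟨mem_powerset.2 ?_, hTβ⟩, ?_⟩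
    · exact hcore ▸ fixed_subset_free_core β
    · exact hcore ▸ addOnes_core_fixed β
  · obtain ⟨S, hS, rfl⟩ := mem_image.1 hβ
    by_contra hne
    exact hβ' (mem_filter.2
      ⟨Finsupp.mem_support_iff.2 hne, addOnes_extends_addOnes κ (mem_filter.1 hS).2⟩)

theorem eq_zero_of_sum_extends_eq_zero {R : Type*} [CommRing R] (z : GBar G m →₀ R)
    (hU : ∀ π, rows π ≠ univ → ∑ β ∈ z.support with Extends π β, z β = 0)
    (hdeg : ∀ β, fixed β = ∅ → z β = 0) : z = 0 := by
  suffices h : ∀ s β, rows (core β) = s → z β = 0 from Finsupp.ext fun β => h _ β rfl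
  intro s
  induction s using WellFoundedGT.induction with
  | _ s ih =>
  rintro β rfl
  set κ := core β
  have hκ : core κ = κ := core_core β
  have hg : ∀ S ⊆ free κ, z (addOnes κ S) = 0 := by
    refine eq_zero_of_sum_supsets_eq_zero (g := fun S => z (addOnes κ S)) ?_ fun T hT => ?_
    · exact hdeg _ (by rw [fixed_addOnes (fixed_core β), empty_inter])
    · rw [← sum_extends_addOnes z hκ hT.subset fun β' h => ih _ h β' rfl]
      exact hU _ (rows_addOnes_ne_univ hT)
  rw [← addOnes_core_fixed β]
  exact hg _ (fixed_subset_free_core β)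

theorem matDeg_eq_card_compl_fixed (β : GBar G m) :
    matDeg (β : Matrix (Fin m) (Fin m) (GA G)) = (fixed β)ᶜ.card := by
  simp [matDeg, fixed, filter_not, compl_eq_univ_sdiff]

variable {F : Type*} [Semiring F] {n : ℕ}

theorem proj_mul_mul_proj_eq_of_corner_eq {β β' : GBar G (n + 1)} (h : corner β = corner β') :
    proj {Fin.last n}ᶜ * β * proj {Fin.last n}ᶜ = proj {Fin.last n}ᶜ * β' * proj {Fin.last n}ᶜ := by
  refine Subtype.ext <| Matrix.ext fun i j => ?_
  simp only [proj_mul_mul_proj_apply, mem_compl, mem_singleton]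
  split_ifs with hij
  · obtain ⟨i', rfl⟩ := Fin.exists_castSucc_eq.2 hij.1
    obtain ⟨j', rfl⟩ := Fin.exists_castSucc_eq.2 hij.2
    exact congrArg (fun γ : GBar G n => γ.1 i' j') h
  · rfl

theorem mul_single_proj_compl_last_eq_zero {z : MonoidAlgebra F (GBar G (n + 1))}
    (hz : z ∈ Set.center _) (hθ : Finsupp.mapDomain corner z.coeff = 0) :
    z * single (proj {Fin.last n}ᶜ) 1 = 0 := by
  set ε : MonoidAlgebra F (GBar G (n + 1)) := single (proj {Fin.last n}ᶜ) 1
  obtain ⟨e, he⟩ := (Function.factorsThrough_iff _).1 fun β β' h =>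
    proj_mul_mul_proj_eq_of_corner_eq (G := G) (n := n) h
  have hεzε : ε * z * ε = 0 := by
    rw [MonoidAlgebra.single_one_mul_mul_single_one, he]
    ext1
    rw [MonoidAlgebra.coeff_mapDomain, Finsupp.mapDomain_comp, hθ, Finsupp.mapDomain_zero,
      MonoidAlgebra.coeff_zero]
  calc z * ε = z * ε * ε := by
        rw [mul_assoc, single_mul_single, proj_mul_proj, inter_self, one_mul]
    _ = ε * z * ε := by rw [((Set.mem_center_iff.1 hz).comm ε).eq]
    _ = 0 := hεzε

theorem mul_single_proj_eq_zero {z : MonoidAlgebra F (GBar G m)} (hz : z ∈ Set.center _)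
    {k : Fin m} (hk : z * single (proj {k}ᶜ) 1 = 0) {I : Finset (Fin m)} (hI : I ≠ univ) :
    z * single (proj I) 1 = 0 := by
  have hcomm : ∀ w, z * w = w * z := fun w => ((Set.mem_center_iff.1 hz).comm w).eq
  obtain ⟨l, hl⟩ : ∃ l, l ∉ I := by simpa [eq_univ_iff_forall] using hI
  have hconj : (proj {l}ᶜ : GBar G m) =
      perm (Equiv.swap k l) * proj {k}ᶜ * perm (Equiv.swap k l)⁻¹ := by
    rw [perm_mul_proj, mul_assoc, ← map_mul, mul_inv_cancel, map_one, mul_one]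
    congr 1
    ext i
    simp [Equiv.swap_apply_eq_iff]
  have hl' : z * single (proj {l}ᶜ) 1 = 0 := by
    rw [hconj, ← one_mul (1 : F), ← single_mul_single, ← one_mul (1 : F), ← single_mul_single,
      ← mul_assoc, ← mul_assoc, hcomm, mul_assoc _ z, hk, mul_zero, zero_mul]
  have hIl : I ∩ {l}ᶜ = I :=
    inter_eq_left.2 fun i hi => mem_compl.2 <| notMem_singleton.2 fun h : i = l => hl (h ▸ hi)
  have hI' : (proj I : GBar G m) = proj I * proj {l}ᶜ := by rw [proj_mul_proj, hIl]
  rw [hI', ← one_mul (1 : F), ← single_mul_single, ← mul_assoc, hcomm, mul_assoc, hl', mul_zero]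

theorem sum_extends_eq_zero {z : MonoidAlgebra F (GBar G m)} (hz : z ∈ Set.center _)
    (hproj : ∀ I ≠ univ, z * single (proj I) 1 = 0) {π : GBar G m} (hπ : rows π ≠ univ) :
    ∑ β ∈ z.coeff.support with Extends π β, z.coeff β = 0 := by
  set f : GBar G m → GBar G m := fun β => proj (rows π) * β * proj (cols π)
  have h0 : single (proj (rows π)) 1 * z * single (proj (cols π)) 1 = 0 := by
    rw [← ((Set.mem_center_iff.1 hz).comm _).eq, mul_assoc, single_mul_single, proj_mul_proj,
      one_mul]
    exact hproj _ fun h => hπ (eq_univ_of_forall fun i => (mem_inter.1 (h ▸ mem_univ i)).1)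
  have hfπ : f π = π := (proj_rows_mul_mul_proj_cols_eq_iff π π).2 (Extends.refl π)
  have hcoeff := Finsupp.mapDomain_apply_eq_sum f z.coeff (a := π)
  rw [← MonoidAlgebra.coeff_mapDomain, ← MonoidAlgebra.single_one_mul_mul_single_one, h0,
    hfπ] at hcoeff
  simp only [f, proj_rows_mul_mul_proj_cols_eq_iff] at hcoeff
  exact hcoeff.symm

end GBar

/-- The restriction of the projection `θ_{n+1} : F[Ḡ_{n+1}] → F[Ḡ_n]` (the linear
extension of taking upper-left corners) to the subspace of the center of `F[Ḡ_{n+1}]`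
spanned by the elements of degree at most `n` is injective. -/
theorem theta_injOn_center (F : Type*) [Field F] (G : Type*) [Group G] (n : ℕ) :
    Set.InjOn (fun x : MonoidAlgebra F (GBar G (n + 1)) => Finsupp.mapDomain corner x.coeff)
      ((Subalgebra.center F (MonoidAlgebra F (GBar G (n + 1))) : Set _) ∩
        (Submodule.span F {x : MonoidAlgebra F (GBar G (n + 1)) |
          ∃ γ : GBar G (n + 1),
            matDeg (γ : Matrix (Fin (n+1)) (Fin (n+1)) (GA G)) ≤ n ∧
            x = single γ (1 : F)} : Set _)) := by
  intro x hx y hy hxy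
  have hz : x - y ∈ Set.center _ := sub_mem hx.1 hy.1
  have hθ : Finsupp.mapDomain corner (x - y).coeff = 0 := by
    rw [MonoidAlgebra.coeff_sub, Finsupp.mapDomain_sub, sub_eq_zero]
    exact hxy
  have hproj : ∀ I ≠ Finset.univ, (x - y) * single (GBar.proj I) 1 = 0 := fun _ =>
    GBar.mul_single_proj_eq_zero hz (GBar.mul_single_proj_compl_last_eq_zero hz hθ)
  have hdeg : ∀ β, GBar.fixed β = ∅ → (x - y).coeff β = 0 := fun β hβ =>
    MonoidAlgebra.coeff_eq_zero_of_mem_span_single (sub_mem hx.2 hy.2)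
      (by simp [GBar.matDeg_eq_card_compl_fixed, hβ])
  refine sub_eq_zero.1 <| MonoidAlgebra.coeff_eq_zero.1 <|
    GBar.eq_zero_of_sum_extends_eq_zero _ (fun π hπ => GBar.sum_extends_eq_zero hz hproj hπ) hdeg
end
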